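/- Let Γ act by isometries on a hyperbolic space X fixing a boundary point ξ, and let β_ξ be the Busemann quasicharacter. If g ∈ Γ_ξ satisfies β_ξ(g) > 0, then g is a hyperbolic isometry with attracting fixed point ξ; if β_ξ(g) ≠ 0 then g is hyperbolic; and conversely every hyperbolic element of Γ_ξ satisfies β_ξ(g) ≠ 0. -/

import Mathlib

/-!
The horokernel `h` of `ξ` is quasi-invariant under `g`: every `gᵐ ∘ u` still converges to `ξ`,
and horokernels along sequences converging to the same boundary point differ by at most `2δ`.
Hence `n ↦ h(x, gⁿx)` is a quasimorphism and stays within `2δ` of `nβ`.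
As `|h(x, y)| ≤ d(x, y)`, `β ≠ 0` forces `d(x, gⁿx)` to grow linearly, and for `β > 0`
the Gromov products `(gⁿx|ξ)` grow like `nβ`, so `gⁿx → ξ`. If `β = 0`, then `h(x, gⁿx)`
is bounded and the four-point condition at `gⁿx` against `ξ` gives
`d(x, g²ⁿx) ≤ d(x, gⁿx) + const`, which forces the translation length to vanish.
-/

open Filter

/-- The Gromov product `(y|z)_x`. -/
noncomputable def gp {X : Type*} [MetricSpace X] (x y z : X) : ℝ :=
  (dist x y + dist x z - dist y z) / 2

/-- An isometry `g` of a metric space is hyperbolic if its stable translation length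
`lim dist(x, gⁿ x)/n` is positive. -/
def IsHyperbolicIsom {X : Type*} [MetricSpace X] (g : X ≃ᵢ X) : Prop :=
  ∀ x : X, ∃ ℓ : ℝ, 0 < ℓ ∧
    Tendsto (fun n : ℕ => dist x ((⇑g)^[n] x) / n) atTop (nhds ℓ)

open Topology Set

lemma le_add_of_tendsto_of_min_le_add {a b : ℕ → ℝ} {c : ℕ × ℕ → ℝ} {A B δ : ℝ}
    (ha : Tendsto a atTop (𝓝 A)) (hb : Tendsto b atTop (𝓝 B)) (hc : Tendsto c atTop atTop)
    (hle : ∀ n m, min (b m) (c (n, m)) ≤ a n + δ) : B ≤ A + δ := by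
  rw [← prod_atTop_atTop_eq] at hc
  have hmin : Tendsto (fun p : ℕ × ℕ => min (b p.2) (c p)) (atTop ×ˢ atTop) (𝓝 B) := by
    refine (hb.comp tendsto_snd).congr' ?_
    filter_upwards [(hb.comp tendsto_snd).eventually (gt_mem_nhds (lt_add_one B)),
      hc.eventually_ge_atTop (B + 1)] with p hbp hcp
    exact (min_eq_left (by simp only [Function.comp_apply] at hbp ⊢; linarith)).symm
  exact le_of_tendsto_of_tendsto hmin ((ha.comp tendsto_fst).add_const δ)
    (Eventually.of_forall fun p => hle p.1 p.2)

lemma le_div_of_subadditive_of_tendsto {s : ℕ → ℝ} {L : ℝ} (hs : Subadditive s)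
    (hL : Tendsto (fun n => s n / n) atTop (𝓝 L)) {n : ℕ} (hn : n ≠ 0) : L ≤ s n / n := by
  have hbdd := hL.bddBelow_range
  rw [tendsto_nhds_unique hL (hs.tendsto_lim hbdd)]
  exact hs.lim_le_div hbdd hn

/-- Fekete's lemma applied to the subadditive sequences `a + C` and `C - a`. -/
lemma abs_sub_mul_le_of_quasimorphism {a : ℕ → ℝ} {C β : ℝ}
    (hqm : ∀ m n, |a (m + n) - a m - a n| ≤ C)
    (hβ : Tendsto (fun n => a n / n) atTop (𝓝 β)) (n : ℕ) : |a n - n * β| ≤ C := by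
  rcases eq_or_ne n 0 with rfl | hn
  · simpa using hqm 0 0
  have hn' : (0 : ℝ) < n := by positivity
  have hC : Tendsto (fun m : ℕ => C / m) atTop (𝓝 0) := tendsto_const_div_atTop_nhds_zero_nat C
  have hup : β ≤ (a n + C) / n := by
    refine le_div_of_subadditive_of_tendsto (s := fun m => a m + C) (fun m k => ?_) ?_ hn
    · linarith [(abs_le.1 (hqm m k)).2]
    · simpa [add_div] using hβ.add hC
  have hlow : -β ≤ (C - a n) / n := by
    refine le_div_of_subadditive_of_tendsto (s := fun m => C - a m) (fun m k => ?_) ?_ hn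
    · linarith [(abs_le.1 (hqm m k)).1]
    · simpa [sub_div] using hC.sub hβ
  rw [le_div_iff₀ hn'] at hup hlow
  exact abs_le.2 ⟨by linarith, by linarith⟩

/-- Comparing `s (2n) / 2n` with `s n / 2n` gives `ℓ ≤ ℓ / 2`. -/
lemma nonpos_of_tendsto_div_of_le_two_mul {s : ℕ → ℝ} {C ℓ : ℝ}
    (hs : ∀ n, s (2 * n) ≤ s n + C) (hℓ : Tendsto (fun n => s n / n) atTop (𝓝 ℓ)) :
    ℓ ≤ 0 := by
  have hdouble : Tendsto (fun n : ℕ => s (2 * n) / (2 * n : ℕ)) atTop (𝓝 ℓ) :=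
    hℓ.comp (tendsto_id.const_mul_atTop' two_pos)
  have hhalf : Tendsto (fun n : ℕ => (s n / n) / 2 + C / 2 / n) atTop (𝓝 (ℓ / 2 + 0)) :=
    (hℓ.div_const 2).add (tendsto_const_div_atTop_nhds_zero_nat _)
  have hle : ∀ n : ℕ, s (2 * n) / (2 * n : ℕ) ≤ (s n / n) / 2 + C / 2 / n := fun n => by
    rcases eq_or_ne n 0 with rfl | hn
    · simp
    calc s (2 * n) / (2 * n : ℕ) ≤ (s n + C) / (2 * n : ℕ) := by gcongr; exact hs n
      _ = (s n / n) / 2 + C / 2 / n := by push_cast; field_simp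
  linarith [le_of_tendsto_of_tendsto' hdouble hhalf hle]

lemma le_of_tendsto_div_of_mul_sub_le {s : ℕ → ℝ} {c C ℓ : ℝ}
    (hs : ∀ n : ℕ, n * c - C ≤ s n) (hℓ : Tendsto (fun n => s n / n) atTop (𝓝 ℓ)) :
    c ≤ ℓ := by
  have hlin : Tendsto (fun n : ℕ => c - C / n) atTop (𝓝 c) := by
    simpa using tendsto_const_nhds.sub (tendsto_const_div_atTop_nhds_zero_nat C)
  refine le_of_tendsto_of_tendsto hlin hℓ ?_
  filter_upwards [eventually_ne_atTop 0] with n hn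
  rw [sub_div' (by positivity), mul_comm]
  exact div_le_div_of_nonneg_right (hs n) n.cast_nonneg

lemma Isometry.iterate {α : Type*} [PseudoEMetricSpace α] {f : α → α} (hf : Isometry f) :
    ∀ n : ℕ, Isometry f^[n]
  | 0 => isometry_id
  | n + 1 => (hf.iterate n).comp hf

lemma Isometry.subadditive_dist_iterate {α : Type*} [PseudoMetricSpace α] {f : α → α}
    (hf : Isometry f) (y : α) : Subadditive fun n => dist y (f^[n] y) := fun m n =>
  calc dist y (f^[m + n] y) ≤ dist y (f^[m] y) + dist (f^[m] y) (f^[m + n] y) :=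
        dist_triangle _ _ _
    _ = dist y (f^[m] y) + dist y (f^[n] y) := by
        rw [Function.iterate_add_apply, (hf.iterate m).dist_eq]

lemma isHyperbolicIsom_of_le_dist_iterate {X : Type*} [MetricSpace X] (g : X ≃ᵢ X) (x : X)
    {c C : ℝ} (hc : 0 < c) (hle : ∀ n : ℕ, n * c - C ≤ dist x ((⇑g)^[n] x)) :
    IsHyperbolicIsom g := by
  intro y
  have hs := g.isometry.subadditive_dist_iterate y
  have hbdd : BddBelow (range fun n : ℕ => dist y ((⇑g)^[n] y) / n) :=
    ⟨0, by rintro _ ⟨n, rfl⟩; positivity⟩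
  refine ⟨hs.lim, ?_, hs.tendsto_lim hbdd⟩
  refine hc.trans_le (le_of_tendsto_div_of_mul_sub_le (C := C + 2 * dist x y) (fun n => ?_)
    (hs.tendsto_lim hbdd))
  have := dist_triangle4 x y ((⇑g)^[n] y) ((⇑g)^[n] x)
  rw [(g.isometry.iterate n).dist_eq, dist_comm y x] at this
  linarith [hle n]

def IsGromovHyperbolic (X : Type*) [MetricSpace X] (δ : ℝ) : Prop :=
  ∀ x y z w : X, min (gp x y w) (gp x w z) - δ ≤ gp x y z

section GromovProduct

variable {X : Type*} [MetricSpace X]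

/-- `u` and `v` converge to the same point of the Gromov boundary. -/
def GromovEquivalent (x₀ : X) (u v : ℕ → X) : Prop :=
  Tendsto (fun p : ℕ × ℕ => gp x₀ (u p.1) (v p.2)) atTop atTop

def IsHorokernel (u : ℕ → X) (h : X → X → ℝ) : Prop :=
  ∀ x y : X, Tendsto (fun n => dist x (u n) - dist y (u n)) atTop (𝓝 (h x y))

/-- The Gromov product `(y|ξ)_p` with the boundary point `ξ` of the horokernel `h`. -/
noncomputable def gpBoundary (h : X → X → ℝ) (p y : X) : ℝ :=
  (dist p y + h p y) / 2

lemma gp_comm (x y z : X) : gp x y z = gp x z y := by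
  simp only [gp, dist_comm y z]
  ring

lemma gp_sub_dist_le (x x' y z : X) : gp x y z - dist x x' ≤ gp x' y z := by
  have := dist_triangle x x' y
  have := dist_triangle x x' z
  simp only [gp]
  linarith

lemma Isometry.gp_eq {Y : Type*} [MetricSpace Y] {f : X → Y} (hf : Isometry f) (x y z : X) :
    gp (f x) (f y) (f z) = gp x y z := by
  simp only [gp, hf.dist_eq]

lemma tendsto_gp_of_tendsto_dist_sub {p y : X} {u : ℕ → X} {c : ℝ}
    (hc : Tendsto (fun n => dist p (u n) - dist y (u n)) atTop (𝓝 c)) :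
    Tendsto (fun n => gp p y (u n)) atTop (𝓝 ((dist p y + c) / 2)) :=
  ((tendsto_const_nhds.add hc).div_const 2).congr fun n => by simp only [gp]; ring

variable {δ : ℝ} {x₀ : X} {u v w : ℕ → X}

namespace GromovEquivalent

lemma symm (huv : GromovEquivalent x₀ u v) : GromovEquivalent x₀ v u := by
  rw [GromovEquivalent, ← prod_atTop_atTop_eq] at *
  exact (huv.comp tendsto_prod_swap).congr fun p => gp_comm x₀ (u p.2) (v p.1)

lemma rebase (huv : GromovEquivalent x₀ u v) (z : X) : GromovEquivalent z u v :=
  tendsto_atTop_mono (fun _ => gp_sub_dist_le x₀ z _ _)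
    (tendsto_atTop_add_const_right _ (-dist x₀ z) huv)

lemma trans (hδ : IsGromovHyperbolic X δ) (huv : GromovEquivalent x₀ u v)
    (hvw : GromovEquivalent x₀ v w) : GromovEquivalent x₀ u w := by
  refine tendsto_atTop_atTop.2 fun C => ?_
  obtain ⟨⟨N, J₁⟩, hNJ⟩ := tendsto_atTop_atTop.1 huv (C + δ)
  obtain ⟨⟨J₂, K⟩, hJK⟩ := tendsto_atTop_atTop.1 hvw (C + δ)
  refine ⟨(N, K), fun ⟨n, k⟩ ⟨hn, hk⟩ => ?_⟩
  have huv' := hNJ (n, max J₁ J₂) ⟨hn, le_max_left _ _⟩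
  have hvw' := hJK (max J₁ J₂, k) ⟨le_max_right _ _, hk⟩
  have := hδ x₀ (u n) (w k) (v (max J₁ J₂))
  have := le_min huv' hvw'
  dsimp only at *
  linarith

lemma map {Y : Type*} [MetricSpace Y] {f : X → Y} (hf : Isometry f)
    (huv : GromovEquivalent x₀ u v) : GromovEquivalent (f x₀) (f ∘ u) (f ∘ v) := by
  simpa only [GromovEquivalent, Function.comp_apply, hf.gp_eq] using huv

lemma comp_of_tendsto_gp (hδ : IsGromovHyperbolic X δ) (hu : GromovEquivalent x₀ u u)
    {f : X → X} (hf : Tendsto (fun n => gp x₀ (u n) (f (u n))) atTop atTop) :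
    GromovEquivalent x₀ u (f ∘ u) := by
  rw [GromovEquivalent, ← prod_atTop_atTop_eq] at *
  refine tendsto_atTop_mono (fun p => ?_)
    (tendsto_atTop_add_const_right _ (-δ) (tendsto_inf_atTop _ hu (hf.comp tendsto_snd)))
  have := hδ x₀ (u p.1) (f (u p.2)) (u p.2)
  simp only [Function.comp_apply] at *
  linarith

lemma iterate (hδ : IsGromovHyperbolic X δ) {f : X → X} (hf : Isometry f)
    (hu : GromovEquivalent x₀ u u) (hfu : GromovEquivalent x₀ u (f ∘ u)) :
    ∀ m : ℕ, GromovEquivalent x₀ u (f^[m] ∘ u)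
  | 0 => hu
  | m + 1 => by
    rw [Function.iterate_succ', Function.comp_assoc]
    exact hfu.trans hδ (((iterate hδ hf hu hfu m).map hf).rebase x₀)

end GromovEquivalent
end GromovProduct

section Horokernel

variable {X : Type*} [MetricSpace X] {δ : ℝ} {x₀ : X} {u v : ℕ → X} {h : X → X → ℝ}

lemma GromovEquivalent.abs_sub_le (hδ : IsGromovHyperbolic X δ) (huv : GromovEquivalent x₀ u v)
    {y z : X} {c c' : ℝ} (hc : Tendsto (fun n => dist y (u n) - dist z (u n)) atTop (𝓝 c))
    (hc' : Tendsto (fun n => dist y (v n) - dist z (v n)) atTop (𝓝 c')) :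
    |c - c'| ≤ 2 * δ := by
  have key : ∀ {u v : ℕ → X} {c c' : ℝ}, GromovEquivalent x₀ u v →
      Tendsto (fun n => dist y (u n) - dist z (u n)) atTop (𝓝 c) →
      Tendsto (fun n => dist y (v n) - dist z (v n)) atTop (𝓝 c') → c' ≤ c + 2 * δ := by
    intro u v c c' huv hc hc'
    have := le_add_of_tendsto_of_min_le_add (tendsto_gp_of_tendsto_dist_sub hc)
      (tendsto_gp_of_tendsto_dist_sub hc') (huv.rebase y) fun n m => by
        have := hδ y z (u n) (v m)
        rw [gp_comm y (v m)] at this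
        linarith
    linarith
  exact abs_le.2 ⟨by linarith [key huv hc hc'], by linarith [key huv.symm hc' hc]⟩

namespace IsHorokernel

lemma abs_le_dist (hh : IsHorokernel u h) (y z : X) : |h y z| ≤ dist y z :=
  le_of_tendsto' (hh y z).abs fun _ => abs_dist_sub_le _ _ _

lemma add (hh : IsHorokernel u h) (x y z : X) : h x y + h y z = h x z :=
  tendsto_nhds_unique (((hh x y).add (hh y z)).congr fun n => by ring) (hh x z)

lemma self (hh : IsHorokernel u h) (x : X) : h x x = 0 := by
  linarith [hh.add x x x]

lemma tendsto_gp (hh : IsHorokernel u h) (p y : X) :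
    Tendsto (fun m => gp p y (u m)) atTop (𝓝 (gpBoundary h p y)) :=
  tendsto_gp_of_tendsto_dist_sub (hh p y)

lemma min_gpBoundary_sub_le_gp (hδ : IsGromovHyperbolic X δ) (hh : IsHorokernel u h)
    (p y z : X) : min (gpBoundary h p y) (gpBoundary h p z) - δ ≤ gp p y z :=
  le_of_tendsto' (((hh.tendsto_gp p y).min (hh.tendsto_gp p z)).sub_const δ) fun m => by
    rw [gp_comm p z]
    exact hδ p y z (u m)

lemma tendsto_gpBoundary_atTop (hu : GromovEquivalent x₀ u u) (hh : IsHorokernel u h) :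
    Tendsto (fun k => gpBoundary h x₀ (u k)) atTop atTop := by
  refine tendsto_atTop_atTop.2 fun C => ?_
  obtain ⟨⟨N, K⟩, hNK⟩ := tendsto_atTop_atTop.1 hu C
  refine ⟨N, fun k hk => ge_of_tendsto (hh.tendsto_gp x₀ (u k)) ?_⟩
  filter_upwards [eventually_ge_atTop K] with j hj using hNK (k, j) ⟨hk, hj⟩

lemma gromovEquivalent_of_tendsto_gpBoundary (hδ : IsGromovHyperbolic X δ)
    (hu : GromovEquivalent x₀ u u) (hh : IsHorokernel u h) {y : ℕ → X}
    (hy : Tendsto (fun n => gpBoundary h x₀ (y n)) atTop atTop) : GromovEquivalent x₀ y u := by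
  rw [GromovEquivalent, ← prod_atTop_atTop_eq]
  refine tendsto_atTop_mono (fun p => hh.min_gpBoundary_sub_le_gp hδ x₀ (y p.1) (u p.2))
    (tendsto_atTop_add_const_right _ (-δ) ?_)
  exact tendsto_inf_atTop _ (hy.comp tendsto_fst)
    ((hh.tendsto_gpBoundary_atTop hu).comp tendsto_snd)

lemma abs_map_sub_le (hδ : IsGromovHyperbolic X δ) (hh : IsHorokernel u h) {f : X → X}
    (hf : Isometry f) (hfu : GromovEquivalent x₀ u (f ∘ u)) (y z : X) :
    |h (f y) (f z) - h y z| ≤ 2 * δ :=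
  hfu.abs_sub_le hδ (hh (f y) (f z))
    ((hh y z).congr fun n => by simp only [Function.comp_apply, hf.dist_eq])

lemma abs_iterate_add_sub_le (hh : IsHorokernel u h) {f : X → X} {C : ℝ}
    (hinv : ∀ m y z, |h (f^[m] y) (f^[m] z) - h y z| ≤ C) (x : X) (m n : ℕ) :
    |h x (f^[m + n] x) - h x (f^[m] x) - h x (f^[n] x)| ≤ C := by
  rw [Function.iterate_add_apply, ← hh.add x (f^[m] x) (f^[m] (f^[n] x))]
  convert hinv m x (f^[n] x) using 2
  ring

lemma isHyperbolicIsom_of_ne_zero (hh : IsHorokernel u h) {g : X ≃ᵢ X} {x : X} {β C : ℝ}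
    (hE : ∀ n : ℕ, |h x ((⇑g)^[n] x) - n * β| ≤ C) (hβ : β ≠ 0) : IsHyperbolicIsom g :=
  isHyperbolicIsom_of_le_dist_iterate g x (C := C) (abs_pos.2 hβ) fun n => by
    have hmul : |(n : ℝ) * β| = n * |β| := by rw [abs_mul, Nat.abs_cast]
    have := abs_sub_abs_le_abs_sub ((n : ℝ) * β) (h x ((⇑g)^[n] x))
    rw [abs_sub_comm] at this
    linarith [hh.abs_le_dist x ((⇑g)^[n] x), hE n]

lemma gromovEquivalent_iterate_of_pos (hδ : IsGromovHyperbolic X δ)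
    (hu : GromovEquivalent x₀ u u) (hh : IsHorokernel u h) {f : X → X} {x : X} {β C : ℝ}
    (hE : ∀ n : ℕ, |h x (f^[n] x) - n * β| ≤ C) (hβ : 0 < β) :
    GromovEquivalent x₀ (fun n => f^[n] x) u := by
  refine hh.gromovEquivalent_of_tendsto_gpBoundary hδ hu (tendsto_atTop_mono (fun n => ?_)
    (tendsto_atTop_add_const_right _ (h x₀ x - C)
      ((tendsto_natCast_atTop_atTop (R := ℝ)).atTop_mul_const hβ)))
  have := hh.add x₀ x (f^[n] x)
  have := le_abs_self (h x₀ (f^[n] x))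
  simp only [gpBoundary]
  linarith [hh.abs_le_dist x₀ (f^[n] x), (abs_le.1 (hE n)).1]

lemma dist_iterate_two_mul_le (hδ : IsGromovHyperbolic X δ) (hh : IsHorokernel u h)
    {f : X → X} (hf : Isometry f) {x : X} {C : ℝ} (hbdd : ∀ n : ℕ, |h x (f^[n] x)| ≤ C)
    (n : ℕ) : dist x (f^[2 * n] x) ≤ dist x (f^[n] x) + 2 * (C + δ) := by
  have hstep : dist (f^[n] x) (f^[2 * n] x) = dist x (f^[n] x) := by
    rw [two_mul, Function.iterate_add_apply, (hf.iterate n).dist_eq]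
  -- seen from `fⁿx`, both `x` and `f²ⁿx` have Gromov product `≥ (d(x, fⁿx) - 2C) / 2` with `ξ`
  have key := hh.min_gpBoundary_sub_le_gp hδ (f^[n] x) x (f^[2 * n] x)
  have hback := hh.add x (f^[n] x) x
  have hfwd := hh.add x (f^[n] x) (f^[2 * n] x)
  rw [hh.self] at hback
  have hn := abs_le.1 (hbdd n)
  have h2n := abs_le.1 (hbdd (2 * n))
  simp only [gpBoundary, gp, sub_le_iff_le_add, min_le_iff] at key
  rw [hstep, dist_comm (f^[n] x) x] at key
  rcases key with key | key <;> linarith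

lemma not_isHyperbolicIsom_of_bounded (hδ : IsGromovHyperbolic X δ) (hh : IsHorokernel u h)
    {g : X ≃ᵢ X} {x : X} {C : ℝ} (hbdd : ∀ n : ℕ, |h x ((⇑g)^[n] x)| ≤ C) :
    ¬IsHyperbolicIsom g := fun hyp => by
  obtain ⟨ℓ, hℓ, hlim⟩ := hyp x
  linarith [nonpos_of_tendsto_div_of_le_two_mul (hh.dist_iterate_two_mul_le hδ g.isometry hbdd)
    hlim]

end IsHorokernel
end Horokernel

/-- Let `g` be an isometry of a hyperbolic space `X` fixing the boundary point `ξ`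
(represented by the Cauchy–Gromov sequence `u`), let `h` be a horokernel based at `ξ` and
`β = β_ξ(g) = lim h(x, gⁿx)/n` the Busemann quasicharacter.  If `β > 0` then `g` is a
hyperbolic isometry with attracting fixed point `ξ`; if `β ≠ 0` then `g` is hyperbolic;
conversely if `g` is hyperbolic then `β ≠ 0`. -/
theorem stmt_14 {X : Type*} [MetricSpace X]
    (δ : ℝ)
    (hδ : ∀ x y z w : X, min (gp x y w) (gp x w z) - δ ≤ gp x y z)
    (x₀ : X) (u : ℕ → X)
    (hu : Tendsto (fun p : ℕ × ℕ => gp x₀ (u p.1) (u p.2)) atTop atTop)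
    (h : X → X → ℝ)
    (hh : ∀ x y : X, Tendsto (fun n => dist x (u n) - dist y (u n)) atTop (nhds (h x y)))
    (g : X ≃ᵢ X)
    (hfix : Tendsto (fun n => gp x₀ (u n) (g (u n))) atTop atTop)
    (x : X) (β : ℝ)
    (hβ : Tendsto (fun n : ℕ => h x ((⇑g)^[n] x) / n) atTop (nhds β)) :
    (0 < β → IsHyperbolicIsom g ∧
      Tendsto (fun p : ℕ × ℕ => gp x₀ ((⇑g)^[p.1] x) (u p.2)) atTop atTop) ∧
    (β ≠ 0 → IsHyperbolicIsom g) ∧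
    (IsHyperbolicIsom g → β ≠ 0) := by
  replace hδ : IsGromovHyperbolic X δ := hδ
  replace hu : GromovEquivalent x₀ u u := hu
  replace hh : IsHorokernel u h := hh
  have hgu : GromovEquivalent x₀ u (g ∘ u) := hu.comp_of_tendsto_gp hδ hfix
  have hinv (m : ℕ) : ∀ y z, |h ((⇑g)^[m] y) ((⇑g)^[m] z) - h y z| ≤ 2 * δ :=
    hh.abs_map_sub_le hδ (g.isometry.iterate m) (GromovEquivalent.iterate hδ g.isometry hu hgu m)
  have hE : ∀ n : ℕ, |h x ((⇑g)^[n] x) - n * β| ≤ 2 * δ :=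
    abs_sub_mul_le_of_quasimorphism (hh.abs_iterate_add_sub_le hinv x) hβ
  refine ⟨fun hpos => ⟨hh.isHyperbolicIsom_of_ne_zero hE hpos.ne',
    hh.gromovEquivalent_iterate_of_pos hδ hu hE hpos⟩, hh.isHyperbolicIsom_of_ne_zero hE, ?_⟩
  rintro hyp rfl
  exact hh.not_isHyperbolicIsom_of_bounded hδ (fun n => by simpa using hE n) hyp
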